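/- arXiv:1706.05942 — 2 statements merged into one kernel-verified Lean document; each statement's English description precedes it below -/
import Mathlib

section
/- Let K be an uncountable algebraically closed field, x = (x_1,…,x_n), and let G : K[[x]]^m → K[[x]]^q be a textile map, i.e., each coefficient of G(y(x)) is a polynomial (over K) in the coefficients of y(x), and for each N there is an integer D_N ≥ N such that the coefficients of G(y(x)) of degree < N depend only on the coefficients of y(x) of degree < D_N. If for every l ∈ ℕ there exists y(x) ∈ K[[x]]^m with G(y(x)) ≡ 0 mod (x)^l, then there exists y(x) ∈ K[[x]]^m with G(y(x)) = 0. -/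
/-!
The equations `P j β = 0` form a countable system of polynomial equations in the countably
many coefficient variables, and an approximate solution modulo a high enough power of `(x)`
solves any finite subsystem. Hence `1` is not in the ideal they generate, and a maximal ideal
`M` containing it exists. The residue field `K[y]/M` has countable dimension over `K`; if it
contained a transcendental `t`, the elements `(t - a)⁻¹`, `a ∈ K`, would be uncountably many
linearly independent ones. So `K[y]/M = K`, and the images of the variables are an exact
solution.
-/

/-- Total degree of a multi-exponent `β : Fin n →₀ ℕ`. -/
def expDeg {n : ℕ} (β : Fin n →₀ ℕ) : ℕ := β.sum fun _ e => e

/-- The family of coefficients of a tuple of power series, as a point of the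
space of coefficient variables `Fin m × (Fin n →₀ ℕ)`. -/
noncomputable def coeffFun {K : Type*} [Field K] {n m : ℕ}
    (y : Fin m → MvPowerSeries (Fin n) K) : Fin m × (Fin n →₀ ℕ) → K :=
  fun v => MvPowerSeries.coeff v.2 (y v.1)

universe u v

open Cardinal

theorem Algebra.IsAlgebraic.of_lift_rank_lt_lift_mk {K : Type u} {L : Type v} [Field K]
    [Field L] [Algebra K L] (h : lift.{u} (Module.rank K L) < lift.{v} #K) :
    Algebra.IsAlgebraic K L :=
  ⟨fun _ => by_contra fun hx =>
    h.not_ge (Transcendental.linearIndependent_sub_inv hx).cardinal_lift_le_rank⟩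

namespace MvPolynomial

variable {σ : Type v} {K : Type u} [Field K]

theorem rank_le_aleph0 [Countable σ] : Module.rank K (MvPolynomial σ K) ≤ ℵ₀ := by
  rw [rank_eq_lift, lift_le_aleph0]
  exact mk_le_aleph0

variable [IsAlgClosed K] [Uncountable K] [Countable σ]

theorem exists_zero_of_ne_top {I : Ideal (MvPolynomial σ K)} (hI : I ≠ ⊤) :
    ∃ x : σ → K, ∀ p ∈ I, eval x p = 0 := by
  obtain ⟨M, hM, hIM⟩ := Ideal.exists_le_maximal I hI
  let := Ideal.Quotient.field M
  have : Algebra.IsAlgebraic K (MvPolynomial σ K ⧸ M) :=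
    .of_lift_rank_lt_lift_mk <| calc
      lift (Module.rank K (MvPolynomial σ K ⧸ M))
        ≤ lift (Module.rank K (MvPolynomial σ K)) := lift_le.2 <|
          (Ideal.Quotient.mkₐ K M).toLinearMap.rank_le_of_surjective Ideal.Quotient.mk_surjective
      _ ≤ ℵ₀ := lift_le_aleph0.2 rank_le_aleph0
      _ < lift #K := aleph0_lt_lift.2 aleph0_lt_mk
  let e : K ≃ₐ[K] MvPolynomial σ K ⧸ M :=
    AlgEquiv.ofBijective (Algebra.ofId _ _) IsAlgClosed.algebraMap_bijective_of_isIntegral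
  let φ : MvPolynomial σ K →ₐ[K] K := e.symm.toAlgHom.comp (Ideal.Quotient.mkₐ K M)
  refine ⟨φ ∘ X, fun p hp => ?_⟩
  have hφp : φ p = 0 := by
    simp [φ, Ideal.Quotient.eq_zero_iff_mem.2 (hIM hp)]
  rwa [← aeval_eq_eval, ← aeval_unique]

theorem exists_common_zero_of_forall_finset {ι : Type*} (f : ι → MvPolynomial σ K)
    (h : ∀ s : Finset ι, ∃ x : σ → K, ∀ i ∈ s, eval x (f i) = 0) :
    ∃ x : σ → K, ∀ i, eval x (f i) = 0 := by
  have hne : Ideal.span (Set.range f) ≠ ⊤ := by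
    rw [Ne, Ideal.eq_top_iff_one, Ideal.span, Finsupp.mem_span_range_iff_exists_finsupp]
    rintro ⟨c, hc⟩
    obtain ⟨x, hx⟩ := h c.support
    have hc0 : eval x (c.sum fun i a => a • f i) = 0 := by
      simp only [Finsupp.sum, map_sum, smul_eq_mul, map_mul]
      exact Finset.sum_eq_zero fun i hi => by rw [hx i hi, mul_zero]
    rw [hc, map_one] at hc0
    exact one_ne_zero hc0
  obtain ⟨x, hx⟩ := exists_zero_of_ne_top hne
  exact ⟨x, fun i => hx _ (Ideal.subset_span ⟨i, rfl⟩)⟩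

end MvPolynomial

theorem strong_approximation_textile_general
    (K : Type*) [Field K] [IsAlgClosed K] [Uncountable K]
    (n m q : ℕ)
    (P : Fin q → (Fin n →₀ ℕ) → MvPolynomial (Fin m × (Fin n →₀ ℕ)) K)
    (happrox : ∀ l : ℕ, ∃ y : Fin m → MvPowerSeries (Fin n) K,
      ∀ j : Fin q, ∀ β : Fin n →₀ ℕ, expDeg β < l →
        MvPolynomial.eval (coeffFun y) (P j β) = 0) :
    ∃ y : Fin m → MvPowerSeries (Fin n) K,
      ∀ j : Fin q, ∀ β : Fin n →₀ ℕ,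
        MvPolynomial.eval (coeffFun y) (P j β) = 0 := by
  obtain ⟨x, hx⟩ := MvPolynomial.exists_common_zero_of_forall_finset
    (fun jβ : Fin q × (Fin n →₀ ℕ) => P jβ.1 jβ.2) fun s => by
      obtain ⟨y, hy⟩ := happrox (s.sup (fun jβ => expDeg jβ.2) + 1)
      exact ⟨coeffFun y, fun jβ hjβ =>
        hy _ _ (Nat.lt_succ_of_le (s.le_sup (f := fun jβ => expDeg jβ.2) hjβ))⟩
  exact ⟨fun i β => x (i, β), fun j β => hx (j, β)⟩

/-- Strong approximation for textile maps over an uncountable algebraically closed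
field: a textile map `G : K[[x]]^m → K[[x]]^q` is encoded by its coefficient
polynomials `P j β` in the coefficient variables of `y`, with the finite-dependence
property (coefficients of `G(y)` of degree `< N` depend only on coefficients of `y`
of degree `< D N`). If `G = 0` has approximate solutions modulo `(x)^l` for every
`l`, then it has an exact solution. -/
theorem strong_approximation_textile
    (K : Type*) [Field K] [IsAlgClosed K] [Uncountable K]
    (n m q : ℕ)
    (P : Fin q → (Fin n →₀ ℕ) → MvPolynomial (Fin m × (Fin n →₀ ℕ)) K)
    (D : ℕ → ℕ) (hD : ∀ N, N ≤ D N)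
    (hdep : ∀ N : ℕ, ∀ j : Fin q, ∀ β : Fin n →₀ ℕ, expDeg β < N →
      ∀ v ∈ (P j β).vars, expDeg v.2 < D N)
    (happrox : ∀ l : ℕ, ∃ y : Fin m → MvPowerSeries (Fin n) K,
      ∀ j : Fin q, ∀ β : Fin n →₀ ℕ, expDeg β < l →
        MvPolynomial.eval (coeffFun y) (P j β) = 0) :
    ∃ y : Fin m → MvPowerSeries (Fin n) K,
      ∀ j : Fin q, ∀ β : Fin n →₀ ℕ,
        MvPolynomial.eval (coeffFun y) (P j β) = 0 :=
  strong_approximation_textile_general K n m q P happrox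
end

section
/- With notation as above, suppose G is a textile map over an uncountable algebraically closed field K admitting approximate solutions modulo (x)^N for every N, and set A_k = ⋂_N C_N^k (the set of degree-< k truncations extendable to approximate solutions of every order). Then each A_k is nonempty and π_{l,k}(A_l) = A_k for all l ≥ k. -/
/-- Extension of a degree-`< k` coefficient tuple by zero. -/
def extendZero {K : Type*} [Field K] {n m : ℕ} (k : ℕ)
    (z : {v : Fin m × (Fin n →₀ ℕ) // expDeg v.2 < k} → K) :
    Fin m × (Fin n →₀ ℕ) → K :=
  fun v => if h : expDeg v.2 < k then z ⟨v, h⟩ else 0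

/-- Projection from degree-`< l` coefficient tuples to degree-`< k` ones. -/
def projTrunc {K : Type*} [Field K] {n m : ℕ} (l k : ℕ)
    (z : {v : Fin m × (Fin n →₀ ℕ) // expDeg v.2 < l} → K) :
    {v : Fin m × (Fin n →₀ ℕ) // expDeg v.2 < k} → K :=
  fun v => if h : expDeg v.1.2 < l then z ⟨v.1, h⟩ else 0

/-- The variety `X_N` of degree-`< D N` truncations of approximate solutions
modulo `(x)^N`. -/
def Xset (K : Type*) [Field K] (n m q : ℕ)
    (P : Fin q → (Fin n →₀ ℕ) → MvPolynomial (Fin m × (Fin n →₀ ℕ)) K)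
    (D : ℕ → ℕ) (N : ℕ) :
    Set ({v : Fin m × (Fin n →₀ ℕ) // expDeg v.2 < D N} → K) :=
  {z | ∀ j : Fin q, ∀ β : Fin n →₀ ℕ, expDeg β < N →
    MvPolynomial.eval (extendZero (D N) z) (P j β) = 0}

/-- `A_k = ⋂_N C_N^k`: the degree-`< k` truncations extendable to approximate
solutions of every order. -/
def Aset (K : Type*) [Field K] (n m q : ℕ)
    (P : Fin q → (Fin n →₀ ℕ) → MvPolynomial (Fin m × (Fin n →₀ ℕ)) K)
    (D : ℕ → ℕ) (k : ℕ) :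
    Set ({v : Fin m × (Fin n →₀ ℕ) // expDeg v.2 < k} → K) :=
  ⋂ (N : ℕ) (_ : k ≤ N), projTrunc (D N) k '' Xset K n m q P D N

open Cardinal

theorem Algebra.IsAlgebraic.of_rank_le_aleph0 {K L : Type*} [Field K] [Uncountable K]
    [Field L] [Algebra K L] (h : Module.rank K L ≤ ℵ₀) :
    Algebra.IsAlgebraic K L := by
  refine ⟨fun x => ?_⟩
  by_contra hx
  have hK :=
    (Transcendental.linearIndependent_sub_inv hx).cardinal_lift_le_rank.trans (lift_le.2 h)
  rw [lift_aleph0, lift_le_aleph0] at hK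
  exact not_countable (α := K) (mk_le_aleph0_iff.1 hK)

namespace MvPolynomial

variable {K σ : Type*} [Field K] [IsAlgClosed K] [Uncountable K] [Countable σ]

theorem exists_eval_eq_zero_of_ne_top {I : Ideal (MvPolynomial σ K)} (hI : I ≠ ⊤) :
    ∃ z : σ → K, ∀ f ∈ I, eval z f = 0 := by
  obtain ⟨M, hM, hIM⟩ := I.exists_le_maximal hI
  let := Ideal.Quotient.field M
  have hrank : Module.rank K (MvPolynomial σ K ⧸ M) ≤ ℵ₀ := by
    refine (LinearMap.rank_le_of_surjective (Ideal.Quotient.mkₐ K M).toLinearMap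
      Ideal.Quotient.mk_surjective).trans ?_
    rw [rank_eq_lift, lift_le_aleph0]
    exact mk_le_aleph0
  have := Algebra.IsAlgebraic.of_rank_le_aleph0 hrank
  have hbij :=
    IsAlgClosed.algebraMap_bijective_of_isIntegral (k := K) (K := MvPolynomial σ K ⧸ M)
  choose z hz using fun i => hbij.2 (Ideal.Quotient.mk M (X i))
  have hmk : (Algebra.ofId K _).comp (aeval z) = Ideal.Quotient.mkₐ K M :=
    algHom_ext fun i => by simpa using hz i
  refine ⟨z, fun f hf => hbij.1 ?_⟩
  rw [map_zero, ← coe_aeval_eq_eval]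
  exact (DFunLike.congr_fun hmk f).trans (Ideal.Quotient.eq_zero_iff_mem.2 (hIM hf))

theorem exists_common_zero_of_directed {ι : Type*} [Nonempty ι]
    {T : ι → Set (MvPolynomial σ K)} (hT : Directed (· ⊆ ·) T)
    (h : ∀ i, ∃ z : σ → K, ∀ f ∈ T i, eval z f = 0) :
    ∃ z : σ → K, ∀ i, ∀ f ∈ T i, eval z f = 0 := by
  have hne : Ideal.span (⋃ i, T i) ≠ ⊤ := by
    rw [Ne, Ideal.eq_top_iff_one, Ideal.span_iUnion]
    intro h1
    have hdir : Directed (· ≤ ·) fun i => Ideal.span (T i) :=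
      hT.mono_comp (g := Ideal.span) _ fun _ _ => Ideal.span_mono
    obtain ⟨i, hi⟩ := (Submodule.mem_iSup_of_directed _ hdir).1 h1
    obtain ⟨z, hz⟩ := h i
    have hker : Ideal.span (T i) ≤ RingHom.ker (eval z) := Ideal.span_le.2 hz
    exact one_ne_zero ((RingHom.mem_ker.1 (hker hi)).symm.trans (map_one _)).symm
  obtain ⟨z, hz⟩ := exists_eval_eq_zero_of_ne_top hne
  exact ⟨z, fun i f hf => hz f (Ideal.subset_span (Set.mem_iUnion_of_mem i hf))⟩

end MvPolynomial

section Truncation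

variable {K : Type*} [Field K] {n m : ℕ}

def truncate (k : ℕ) (z : Fin m × (Fin n →₀ ℕ) → K) :
    {v : Fin m × (Fin n →₀ ℕ) // expDeg v.2 < k} → K :=
  fun v => z v.1

theorem extendZero_of_lt {k : ℕ} (z : {v : Fin m × (Fin n →₀ ℕ) // expDeg v.2 < k} → K)
    {v : Fin m × (Fin n →₀ ℕ)} (hv : expDeg v.2 < k) : extendZero k z v = z ⟨v, hv⟩ :=
  dif_pos hv

theorem projTrunc_of_lt {l k : ℕ} (z : {v : Fin m × (Fin n →₀ ℕ) // expDeg v.2 < l} → K)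
    (v : {v : Fin m × (Fin n →₀ ℕ) // expDeg v.2 < k}) (hv : expDeg v.1.2 < l) :
    projTrunc l k z v = z ⟨v.1, hv⟩ :=
  dif_pos hv

theorem projTrunc_truncate {l k : ℕ} (hkl : k ≤ l) (z : Fin m × (Fin n →₀ ℕ) → K) :
    projTrunc l k (truncate l z) = truncate k z :=
  funext fun v => projTrunc_of_lt _ v (v.2.trans_le hkl)

theorem eval_extendZero_truncate {k : ℕ} {p : MvPolynomial (Fin m × (Fin n →₀ ℕ)) K}
    (hp : ∀ v ∈ p.vars, expDeg v.2 < k) (z : Fin m × (Fin n →₀ ℕ) → K) :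
    MvPolynomial.eval (extendZero k (truncate k z)) p = MvPolynomial.eval z p :=
  MvPolynomial.hom_congr_vars (by ext; simp)
    (fun v hv _ => by simp [extendZero_of_lt _ (hp v hv), truncate]) rfl

end Truncation

section Approximation

open MvPolynomial

variable {K : Type*} [Field K] {n m q : ℕ}
  (P : Fin q → (Fin n →₀ ℕ) → MvPolynomial (Fin m × (Fin n →₀ ℕ)) K) (D : ℕ → ℕ)

theorem truncate_mem_Xset {N : ℕ}
    (hdep : ∀ j β, expDeg β < N → ∀ v ∈ (P j β).vars, expDeg v.2 < D N)
    {z : Fin m × (Fin n →₀ ℕ) → K}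
    (hz : ∀ j β, expDeg β < N → eval z (P j β) = 0) :
    truncate (D N) z ∈ Xset K n m q P D N := fun j β hβ => by
  rw [eval_extendZero_truncate (hdep j β hβ)]
  exact hz j β hβ

theorem truncate_mem_Aset (hD : ∀ N, N ≤ D N)
    (hdep : ∀ N j β, expDeg β < N → ∀ v ∈ (P j β).vars, expDeg v.2 < D N)
    {z : Fin m × (Fin n →₀ ℕ) → K} (hz : ∀ j β, eval z (P j β) = 0) (k : ℕ) :
    truncate k z ∈ Aset K n m q P D k :=
  Set.mem_iInter₂.2 fun N hkN =>
    ⟨truncate (D N) z, truncate_mem_Xset P D (hdep N) fun j β _ => hz j β,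
      projTrunc_truncate (hkN.trans (hD N)) z⟩

theorem Aset_zero_nonempty
    (hdep : ∀ N j β, expDeg β < N → ∀ v ∈ (P j β).vars, expDeg v.2 < D N)
    (happrox : ∀ N, ∃ y : Fin m → MvPowerSeries (Fin n) K,
      ∀ j β, expDeg β < N → eval (coeffFun y) (P j β) = 0) :
    (Aset K n m q P D 0).Nonempty := by
  have hempty (v : {v : Fin m × (Fin n →₀ ℕ) // expDeg v.2 < 0}) : False :=
    Nat.not_lt_zero _ v.2
  refine ⟨fun v => (hempty v).elim, Set.mem_iInter₂.2 fun N _ => ?_⟩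
  obtain ⟨y, hy⟩ := happrox N
  exact ⟨_, truncate_mem_Xset P D (hdep N) hy, funext fun v => (hempty v).elim⟩

theorem exists_solution_truncate_eq [IsAlgClosed K] [Uncountable K] (hD : ∀ N, N ≤ D N)
    {k : ℕ} {a : {v : Fin m × (Fin n →₀ ℕ) // expDeg v.2 < k} → K}
    (ha : a ∈ Aset K n m q P D k) :
    ∃ z : Fin m × (Fin n →₀ ℕ) → K,
      (∀ j β, eval z (P j β) = 0) ∧ truncate k z = a := by
  let T : ℕ → Set (MvPolynomial (Fin m × (Fin n →₀ ℕ)) K) := fun N =>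
    {f | ∃ j β, expDeg β < N ∧ P j β = f} ∪ Set.range fun v => X v.1 - C (a v)
  have hT : Monotone T := fun N N' hN =>
    Set.union_subset_union_left _ fun _ ⟨j, β, hβ, hf⟩ => ⟨j, β, hβ.trans_le hN, hf⟩
  have hzero (N : ℕ) : ∃ z, ∀ f ∈ T N, eval z f = 0 := by
    obtain ⟨w, hw, hwa⟩ := Set.mem_iInter₂.1 ha (max N k) (le_max_right N k)
    refine ⟨extendZero (D (max N k)) w, ?_⟩
    rintro _ (⟨j, β, hβ, rfl⟩ | ⟨v, rfl⟩)
    · exact hw j β (hβ.trans_le (le_max_left N k))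
    · have hv : expDeg v.1.2 < D (max N k) :=
        (v.2.trans_le (le_max_right N k)).trans_le (hD _)
      rw [map_sub, eval_X, eval_C, extendZero_of_lt w hv, ← hwa,
        projTrunc_of_lt w v hv, sub_self]
  obtain ⟨z, hz⟩ := exists_common_zero_of_directed hT.directed_le hzero
  refine ⟨z, fun j β => hz (expDeg β + 1) _ (Or.inl ⟨j, β, Nat.lt_succ_self _, rfl⟩),
    funext fun v => ?_⟩
  have hv := hz 0 _ (Or.inr ⟨v, rfl⟩)
  rwa [map_sub, eval_X, eval_C, sub_eq_zero] at hv

end Approximation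

/-- If the textile map (over an uncountable algebraically closed field) admits
approximate solutions modulo `(x)^N` for every `N`, then each `A_k` is nonempty and
`π_{l,k}(A_l) = A_k` for all `l ≥ k`. -/
theorem Aset_nonempty_and_compatible
    (K : Type*) [Field K] [IsAlgClosed K] [Uncountable K]
    (n m q : ℕ)
    (P : Fin q → (Fin n →₀ ℕ) → MvPolynomial (Fin m × (Fin n →₀ ℕ)) K)
    (D : ℕ → ℕ) (hD : ∀ N, N ≤ D N)
    (hdep : ∀ N : ℕ, ∀ j : Fin q, ∀ β : Fin n →₀ ℕ, expDeg β < N →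
      ∀ v ∈ (P j β).vars, expDeg v.2 < D N)
    (happrox : ∀ N : ℕ, ∃ y : Fin m → MvPowerSeries (Fin n) K,
      ∀ j : Fin q, ∀ β : Fin n →₀ ℕ, expDeg β < N →
        MvPolynomial.eval (coeffFun y) (P j β) = 0) :
    (∀ k : ℕ, (Aset K n m q P D k).Nonempty) ∧
    (∀ l k : ℕ, k ≤ l →
      projTrunc l k '' Aset K n m q P D l = Aset K n m q P D k) := by
  have hlift := fun k a (ha : a ∈ Aset K n m q P D k) =>
    exists_solution_truncate_eq P D hD ha
  have hmem := fun z hz => truncate_mem_Aset P D hD hdep (z := z) hz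
  refine ⟨fun k => ?_, fun l k hkl => Set.Subset.antisymm ?_ fun a ha => ?_⟩
  · obtain ⟨z, hz, -⟩ := hlift 0 _ (Aset_zero_nonempty P D hdep happrox).some_mem
    exact ⟨_, hmem z hz k⟩
  · rintro _ ⟨a, ha, rfl⟩
    obtain ⟨z, hz, rfl⟩ := hlift l a ha
    rw [projTrunc_truncate hkl]
    exact hmem z hz k
  · obtain ⟨z, hz, rfl⟩ := hlift k a ha
    exact ⟨_, hmem z hz l, projTrunc_truncate hkl z⟩
end
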